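/- For any distributions P and Q on a set X, the squared Hellinger distance between P and the mixture (P+Q)/2 is bounded above and below by constant multiples of the squared Hellinger distance between P and Q; i.e., there exist universal constants c, C > 0 such that c·H²(P, (P+Q)/2) ≤ H²(P, Q) ≤ C·H²(P, (P+Q)/2). -/
import Mathlib


/-- Squared Hellinger distance between densities on a finite set. -/
noncomputable def hellSq {X : Type} [Fintype X] (p q : X → ℝ) : ℝ :=
  ∑ x, (Real.sqrt (p x) - Real.sqrt (q x)) ^ 2

lemma hell_ptwise (a b m : ℝ) (ha : 0 ≤ a) (hb : 0 ≤ b) (hm : 0 ≤ m)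
    (hm2 : m ^ 2 = (a ^ 2 + b ^ 2) / 2) :
    (a - m) ^ 2 ≤ (a - b) ^ 2 ∧ (a - b) ^ 2 ≤ 16 * (a - m) ^ 2 := by
  have hmle : m ≤ a + b := by nlinarith [sq_nonneg (a + b), sq_nonneg (a - b)]
  constructor
  · nlinarith [sq_nonneg (a - b), sq_nonneg (m - b), mul_nonneg (mul_nonneg ha hb) hm,
      mul_nonneg ha hb, mul_nonneg ha hm, mul_nonneg hb hm]
  · nlinarith [sq_nonneg (a - b), mul_nonneg (sq_nonneg (a - b)) (sub_nonneg.2 hmle),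
      mul_nonneg ha hm, mul_nonneg hb hm, mul_nonneg ha hb,
      mul_nonneg (mul_nonneg ha hb) hm]

/-- For any distributions `P`, `Q` (given by densities `p`, `q`) on a set `X`, the squared
Hellinger distance `H²(P, (P+Q)/2)` is equivalent up to universal constants to `H²(P, Q)`. -/
theorem hellinger_mixture_equiv :
    ∃ c C : ℝ, 0 < c ∧ 0 < C ∧
      ∀ (X : Type) [Fintype X] (p q : X → ℝ),
        (∀ x, 0 ≤ p x) → (∀ x, 0 ≤ q x) →
        (∑ x, p x) = 1 → (∑ x, q x) = 1 →
        c * hellSq p (fun x => (p x + q x) / 2) ≤ hellSq p q ∧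
          hellSq p q ≤ C * hellSq p (fun x => (p x + q x) / 2) := by
  refine ⟨1, 16, one_pos, by norm_num, ?_⟩
  intro X _ p q hp hq _ _
  have key : ∀ x : X,
      (Real.sqrt (p x) - Real.sqrt ((p x + q x) / 2)) ^ 2
        ≤ (Real.sqrt (p x) - Real.sqrt (q x)) ^ 2 ∧
      (Real.sqrt (p x) - Real.sqrt (q x)) ^ 2
        ≤ 16 * (Real.sqrt (p x) - Real.sqrt ((p x + q x) / 2)) ^ 2 := by
    intro x
    apply hell_ptwise _ _ _ (Real.sqrt_nonneg _) (Real.sqrt_nonneg _) (Real.sqrt_nonneg _)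
    rw [Real.sq_sqrt (hp x), Real.sq_sqrt (hq x), Real.sq_sqrt (by have := hp x; have := hq x; positivity)]
  constructor
  · rw [one_mul]
    exact Finset.sum_le_sum fun x _ => (key x).1
  · unfold hellSq
    rw [Finset.mul_sum]
    exact Finset.sum_le_sum fun x _ => (key x).2
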